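/- arXiv:0808.2382 — 2 statements merged into one kernel-verified Lean document; each statement's English description precedes it below -/
import Mathlib

section
/- Let $n \ge 1$, let $A_{Q_n}$ be the adjacency matrix of the hypercube $Q_n$, and let $\psi_t = \exp(-itA_{Q_n})\delta_{0_n}$ with $P_t(x) = |\psi_t(x)|^2$. Then for every $a \in \mathbb{Z}_2^n$ and every $t \in \mathbb{R}$, the Fourier coefficient of the probability distribution satisfies $\sum_{x \in \mathbb{Z}_2^n} P_t(x)\,(-1)^{a \cdot x} = (\cos 2t)^{|a|}$. -/
open Matrix Complex Finset Kronecker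

/-- Hamming weight of a vector in `(ZMod 2)^n`. -/
def wt {n : ℕ} (x : Fin n → ZMod 2) : ℕ := (Finset.univ.filter fun i => x i = 1).card

/-- Inner product modulo 2. -/
def dot {n : ℕ} (a x : Fin n → ZMod 2) : ZMod 2 := ∑ i, a i * x i

/-- Adjacency matrix of the hypercube `Q_n`: `A[x,y] = 1` iff `|x ⊕ y| = 1`. -/
def adjQ (n : ℕ) : Matrix (Fin n → ZMod 2) (Fin n → ZMod 2) ℂ :=
  Matrix.of fun x y => if wt (x + y) = 1 then 1 else 0

/-- Continuous-time quantum walk `ψ_t = exp(-itA) ψ₀`. -/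
noncomputable def walk {V : Type*} [Fintype V] [DecidableEq V]
    (A : Matrix V V ℂ) (ψ0 : V → ℂ) (t : ℝ) : V → ℂ :=
  (NormedSpace.exp ((-(t : ℂ) * Complex.I) • A)).mulVec ψ0

/-!
The Walsh characters `walsh s x = (-1)^(s ⬝ x)` are eigenvectors of `A_{Q_n}` with eigenvalue
`n - 2|s|`. Expanding `δ₀` in this basis shows that the walk factorises over the coordinates:
`ψ_t x = ∏ i, (cos t if x i = 0, -i sin t if x i = 1)`, i.e. it is `n` independent rotations of a
single qubit. Hence `P_t` is a product of Bernoulli distributions with weights `(cos² t, sin² t)`,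
and its Fourier coefficient at `a` is `∏_{a_i = 1} (cos² t - sin² t) = (cos 2t)^|a|`.
-/

section MatrixExp

attribute [local instance] Matrix.linftyOpNormedAddCommGroup Matrix.linftyOpNormedRing
  Matrix.linftyOpNormedAlgebra

theorem Matrix.exp_mulVec_of_mulVec_eq_smul {𝕂 V : Type*} [RCLike 𝕂] [Fintype V]
    [DecidableEq V] {A : Matrix V V 𝕂} {v : V → 𝕂} {μ : 𝕂} (h : A *ᵥ v = μ • v) :
    NormedSpace.exp A *ᵥ v = NormedSpace.exp μ • v := by
  have hpow (k : ℕ) : A ^ k *ᵥ v = μ ^ k • v := by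
    induction k with
    | zero => simp
    | succ k ih => rw [pow_succ', ← mulVec_mulVec, ih, mulVec_smul, h, smul_smul, ← pow_succ]
  have hA := (NormedSpace.exp_series_hasSum_exp' (𝕂 := 𝕂) A).map
    (mulVec.addMonoidHomLeft v) (continuous_id.matrix_mulVec continuous_const)
  have hμ := (NormedSpace.exp_series_hasSum_exp' (𝕂 := 𝕂) μ).smul_const v
  refine hA.unique (hμ.congr_fun fun k => ?_)
  simp [mulVec.addMonoidHomLeft, smul_mulVec, hpow, smul_smul]

end MatrixExp

theorem AddChar.map_sum_eq_prod {ι A M : Type*} [AddCommMonoid A] [CommMonoid M]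
    (ψ : AddChar A M) (s : Finset ι) (f : ι → A) : ψ (∑ i ∈ s, f i) = ∏ i ∈ s, ψ (f i) := by
  induction s using Finset.cons_induction with
  | empty => simp
  | cons i s _ ih => rw [sum_cons, prod_cons, map_add_eq_mul, ih]

theorem Pi.single_left_injective {ι M : Type*} [DecidableEq ι] [Zero M] {b : M} (hb : b ≠ 0) :
    Function.Injective fun i : ι => Pi.single i b := by
  intro i j h
  by_contra hij
  simpa [Pi.single_apply, hij, hb] using congr_fun h i

theorem ZMod.eq_zero_or_eq_one (u : ZMod 2) : u = 0 ∨ u = 1 := by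
  decide +revert

theorem ZMod.sum_univ_two {M : Type*} [AddCommMonoid M] (f : ZMod 2 → M) :
    ∑ b, f b = f 0 + f 1 :=
  Fin.sum_univ_two f

theorem ZMod.pi_add_cancel_left {ι : Type*} (x z : ι → ZMod 2) : x + (x + z) = z :=
  funext fun i => CharTwo.add_cancel_left (x i) (z i)

def signChar (R : Type*) [CommRing R] : AddChar (ZMod 2) R where
  toFun u := (-1) ^ u.val
  map_zero_eq_one' := by simp
  map_add_eq_mul' u v := by
    rw [ZMod.val_add, ← pow_add, neg_one_pow_eq_pow_mod_two (u.val + v.val)]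

section signChar

variable {R : Type*} [CommRing R]

theorem signChar_apply (u : ZMod 2) : signChar R u = (-1) ^ u.val := rfl

@[simp] theorem signChar_one : signChar R 1 = -1 := pow_one _

theorem signChar_eq_ite (u : ZMod 2) : signChar R u = if u = 1 then -1 else 1 := by
  obtain rfl | rfl := ZMod.eq_zero_or_eq_one u <;> simp

variable {n : ℕ}

theorem sum_signChar_eq_sub_two_mul_wt (s : Fin n → ZMod 2) :
    ∑ i, signChar R (s i) = n - 2 * wt s := by
  have (u : ZMod 2) : signChar R u = 1 - 2 * if u = 1 then 1 else 0 := by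
    rw [signChar_eq_ite]; split_ifs <;> ring
  simp only [this, sum_sub_distrib, ← mul_sum, sum_boole, wt, sum_const, card_univ,
    Fintype.card_fin, nsmul_eq_mul, mul_one]

theorem sum_prod_mul_signChar_dot (f : ZMod 2 → R) (a : Fin n → ZMod 2) :
    ∑ x, (∏ i, f (x i)) * signChar R (dot a x) = ∏ i, (f 0 + f 1 * signChar R (a i)) := by
  simp only [dot, AddChar.map_sum_eq_prod, ← prod_mul_distrib]
  rw [← Fintype.prod_sum fun i b => f b * signChar R (a i * b)]
  simp [ZMod.sum_univ_two]

end signChar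

section Hypercube

variable {n : ℕ}

theorem wt_eq_one_iff {z : Fin n → ZMod 2} : wt z = 1 ↔ ∃ k, Pi.single k 1 = z := by
  simp only [wt, card_eq_one, Finset.ext_iff, mem_filter, mem_univ, true_and, mem_singleton,
    funext_iff, Pi.single_apply]
  refine exists_congr fun k => forall_congr' fun i => ?_
  obtain h | h := ZMod.eq_zero_or_eq_one (z i) <;> split_ifs <;> simp_all [eq_comm]

theorem filter_wt_eq_one :
    univ.filter (fun z : Fin n → ZMod 2 => wt z = 1) = univ.image fun k => Pi.single k 1 := by
  ext z
  simp [wt_eq_one_iff]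

theorem adjQ_mulVec_apply (v : (Fin n → ZMod 2) → ℂ) (x : Fin n → ZMod 2) :
    (adjQ n *ᵥ v) x = ∑ k, v (x + Pi.single k 1) := by
  calc (adjQ n *ᵥ v) x = ∑ y, if wt (x + y) = 1 then v y else 0 := by
        simp [adjQ, mulVec, dotProduct, ite_mul]
    _ = ∑ z, if wt z = 1 then v (x + z) else 0 :=
        (Fintype.sum_equiv (Equiv.addLeft x) _ _ fun z => by
          simp only [Equiv.coe_addLeft, ZMod.pi_add_cancel_left]).symm
    _ = ∑ k, v (x + Pi.single k 1) := by
        rw [← sum_filter, filter_wt_eq_one, sum_image (Pi.single_left_injective one_ne_zero).injOn]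

theorem dot_comm (a x : Fin n → ZMod 2) : dot a x = dot x a := dotProduct_comm a x

theorem dot_add_single (s x : Fin n → ZMod 2) (k : Fin n) :
    dot s (x + Pi.single k 1) = dot s x + s k := by
  change s ⬝ᵥ (x + Pi.single k 1) = s ⬝ᵥ x + s k
  rw [dotProduct_add, dotProduct_single, mul_one]

def walsh (s x : Fin n → ZMod 2) : ℂ := signChar ℂ (dot s x)

theorem adjQ_mulVec_walsh (s : Fin n → ZMod 2) :
    adjQ n *ᵥ walsh s = ((n : ℂ) - 2 * wt s) • walsh s := by
  ext x
  simp only [adjQ_mulVec_apply, walsh, dot_add_single, AddChar.map_add_eq_mul]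
  rw [← mul_sum, sum_signChar_eq_sub_two_mul_wt, Pi.smul_apply, smul_eq_mul, mul_comm, walsh]

theorem inv_two_pow_mul_sum_prod_mul_walsh (f : ZMod 2 → ℂ) (x : Fin n → ZMod 2) :
    (2 ^ n : ℂ)⁻¹ * ∑ s, (∏ i, f (s i)) * walsh s x
      = ∏ i, (f 0 + f 1 * signChar ℂ (x i)) / 2 := by
  simp only [walsh, dot_comm _ x, sum_prod_mul_signChar_dot, prod_div_distrib, prod_const,
    card_univ, Fintype.card_fin, inv_mul_eq_div]

theorem single_zero_eq_sum_walsh :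
    (Pi.single 0 1 : (Fin n → ZMod 2) → ℂ) = (2 ^ n : ℂ)⁻¹ • ∑ s, walsh s := by
  ext x
  have h := inv_two_pow_mul_sum_prod_mul_walsh (fun _ => 1) x
  have hcoord (u : ZMod 2) : (1 + signChar ℂ u) / 2 = if u = 0 then 1 else 0 := by
    obtain rfl | rfl := ZMod.eq_zero_or_eq_one u <;> norm_num
  simp only [prod_const_one, one_mul, hcoord, prod_boole] at h
  simp [h, Pi.single_apply, funext_iff]

theorem exp_smul_adjQ_mulVec_single_zero (c : ℂ) (x : Fin n → ZMod 2) :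
    (NormedSpace.exp (c • adjQ n) *ᵥ Pi.single 0 1) x
      = ∏ i, if x i = 0 then Complex.cosh c else Complex.sinh c := by
  have heig (s : Fin n → ZMod 2) :
      NormedSpace.exp (c • adjQ n) *ᵥ walsh s = (∏ i, exp (c * signChar ℂ (s i))) • walsh s := by
    rw [Matrix.exp_mulVec_of_mulVec_eq_smul (μ := c * (n - 2 * wt s)), ← exp_eq_exp_ℂ,
      ← sum_signChar_eq_sub_two_mul_wt, mul_sum, exp_sum]
    rw [smul_mulVec, adjQ_mulVec_walsh, smul_smul]
  simp only [single_zero_eq_sum_walsh, mulVec_smul, mulVec_sum, heig, Pi.smul_apply,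
    Finset.sum_apply, smul_eq_mul,
    inv_two_pow_mul_sum_prod_mul_walsh (fun b => exp (c * signChar ℂ b))]
  refine prod_congr rfl fun i _ => ?_
  obtain h | h := ZMod.eq_zero_or_eq_one (x i) <;>
    simp [h, Complex.cosh, Complex.sinh, sub_eq_add_neg]

theorem norm_walk_single_zero_sq (t : ℝ) (x : Fin n → ZMod 2) :
    ‖walk (adjQ n) (Pi.single 0 1) t x‖ ^ 2
      = ∏ i, if x i = 0 then Real.cos t ^ 2 else Real.sin t ^ 2 := by
  rw [walk, exp_smul_adjQ_mulVec_single_zero, norm_prod, ← prod_pow]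
  refine prod_congr rfl fun i _ => ?_
  split_ifs
  · rw [neg_mul, Complex.cosh_neg, cosh_mul_I, ← ofReal_cos, norm_real, Real.norm_eq_abs, sq_abs]
  · rw [neg_mul, Complex.sinh_neg, sinh_mul_I, norm_neg, norm_mul, norm_I, mul_one, ← ofReal_sin,
      norm_real, Real.norm_eq_abs, sq_abs]

end Hypercube

theorem hypercube_prob_fourier_general (n : ℕ)
    (a : Fin n → ZMod 2) (t : ℝ) :
    ∑ x : Fin n → ZMod 2,
        ‖walk (adjQ n) (Pi.single (0 : Fin n → ZMod 2) 1) t x‖ ^ 2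
          * (-1 : ℝ) ^ (dot a x).val
      = Real.cos (2 * t) ^ wt a := by
  calc _ = ∑ x : Fin n → ZMod 2, (∏ i, if x i = 0 then Real.cos t ^ 2 else Real.sin t ^ 2)
          * signChar ℝ (dot a x) := by simp only [norm_walk_single_zero_sq, signChar_apply]
    _ = ∏ i, (Real.cos t ^ 2 + Real.sin t ^ 2 * signChar ℝ (a i)) :=
        (sum_prod_mul_signChar_dot (fun b => if b = 0 then _ else _) a).trans (by simp)
    _ = ∏ i, if a i = 1 then Real.cos (2 * t) else 1 := by
        refine prod_congr rfl fun i _ => ?_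
        rw [signChar_eq_ite]
        split_ifs
        · rw [Real.cos_two_mul']; ring
        · rw [mul_one, Real.cos_sq_add_sin_sq]
    _ = Real.cos (2 * t) ^ wt a := by rw [prod_ite, prod_const, prod_const_one, mul_one]; rfl

/-- The Fourier coefficients of the probability distribution of the quantum
walk on `Q_n` started at `0_n` satisfy `P̂_t(a) = (cos 2t)^{|a|}`. -/
theorem hypercube_prob_fourier (n : ℕ) (hn : 1 ≤ n)
    (a : Fin n → ZMod 2) (t : ℝ) :
    ∑ x : Fin n → ZMod 2,
        ‖walk (adjQ n) (Pi.single (0 : Fin n → ZMod 2) 1) t x‖ ^ 2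
          * (-1 : ℝ) ^ (dot a x).val
      = Real.cos (2 * t) ^ wt a :=
  hypercube_prob_fourier_general n a t
end

section
/- For $n \ge 2$, the continuous-time quantum walk on the join $Q_n + Q_n$ of two hypercubes (the graph on $\mathbb{Z}_2 \times \mathbb{Z}_2^n$ consisting of two copies of $Q_n$ together with every edge between a vertex of one copy and a vertex of the other, with adjacency matrix $I_2 \otimes A_{Q_n} + X \otimes J$ where $J$ is the $2^n \times 2^n$ all-ones matrix), starting at vertex $(0, 0_n)$, is not instantaneous uniform mixing at any time: for every $t \in \mathbb{R}$ there exists a vertex $v$ with $|\psi_t(v)|^2 \neq 2^{-(n+1)}$. -/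
open Matrix Complex Finset Kronecker

/-- The Pauli matrix `X` (0 on the diagonal, 1 off the diagonal). -/
def Xmat : Matrix (ZMod 2) (ZMod 2) ℂ := Matrix.of fun i j => if i ≠ j then 1 else 0

/-- Adjacency matrix of the join `Q_n + Q_n` of two hypercubes:
`I ⊗ Q_n + X ⊗ J` with `J` the all-ones matrix. -/
def joinQQ (n : ℕ) :
    Matrix (ZMod 2 × (Fin n → ZMod 2)) (ZMod 2 × (Fin n → ZMod 2)) ℂ :=
  (1 : Matrix (ZMod 2) (ZMod 2) ℂ) ⊗ₖ (adjQ n)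
    + Xmat ⊗ₖ (Matrix.of fun (_ _ : Fin n → ZMod 2) => (1 : ℂ))

/-!
Translating the second copy of `V` by `y` and fixing the first is an automorphism of the join of
two copies of a Cayley graph on an abelian group `V`; it fixes `(0, 0)` and moves `(1, 0)` to
`(1, y)`, so the amplitude `ψ_t (1, x)` does not depend on `x`. The all-ones row vector and the
row vector equal to `±1` on the two copies are left eigenvectors of the adjacency matrix with
eigenvalues `d ± |V|` (`d` the degree), and half their difference is the indicator of the second
copy. Hence `|V| ψ_t (1, x) = (e^{-it(d+|V|)} - e^{-it(d-|V|)}) / 2`, so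
`|ψ_t (1, x)|² ≤ |V|⁻² < (2 |V|)⁻¹` as soon as `|V| > 2`.
-/

namespace Matrix

variable {m n 𝕂 : Type*} [Fintype m] [DecidableEq m] [Fintype n] [DecidableEq n] [RCLike 𝕂]

theorem exp_submatrix_equiv (e : n ≃ m) (A : Matrix m m 𝕂) :
    NormedSpace.exp (A.submatrix e e) = (NormedSpace.exp A).submatrix e e := by
  open scoped Norms.Operator in
  exact (NormedSpace.map_exp (reindexAlgEquiv ℚ 𝕂 e.symm)
    (continuous_id.matrix_submatrix _ _) A).symm

theorem exp_mulVec_of_mulVec_eq_smul_s13 {A : Matrix m m 𝕂} {c : 𝕂}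
    {v : m → 𝕂} (h : A *ᵥ v = c • v) : NormedSpace.exp A *ᵥ v = NormedSpace.exp c • v := by
  open scoped Norms.Operator in
  have hpow (k : ℕ) : A ^ k *ᵥ v = c ^ k • v := by
    induction k with
    | zero => simp
    | succ k ih => rw [pow_succ', ← mulVec_mulVec, ih, mulVec_smul, h, smul_smul, ← pow_succ]
  have hA := (NormedSpace.exp_series_hasSum_exp' (𝕂 := 𝕂) A).map ((mulVecBilin 𝕂 𝕂).flip v)
    (continuous_id.matrix_mulVec continuous_const)
  have hc := (NormedSpace.exp_series_hasSum_exp' (𝕂 := 𝕂) c).smul_const v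
  refine hA.unique (hc.congr_fun fun k => ?_)
  simp [hpow, smul_smul]

theorem vecMul_exp_of_vecMul_eq_smul {A : Matrix m m 𝕂} {c : 𝕂}
    {v : m → 𝕂} (h : v ᵥ* A = c • v) : v ᵥ* NormedSpace.exp A = NormedSpace.exp c • v := by
  rw [← mulVec_transpose, ← exp_transpose]
  rw [← mulVec_transpose] at h
  exact exp_mulVec_of_mulVec_eq_smul_s13 h

end Matrix

section Walk

variable {W : Type*} [Fintype W] [DecidableEq W]

theorem walk_single_apply (A : Matrix W W ℂ) (o v : W) (t : ℝ) :
    walk A (Pi.single o 1) t v = NormedSpace.exp ((-(t : ℂ) * I) • A) v o := by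
  simp [walk]

theorem walk_single_apply_equiv_of_submatrix_eq {A : Matrix W W ℂ} {σ : W ≃ W}
    (hA : A.submatrix σ σ = A) {o : W} (ho : σ o = o) (t : ℝ) (v : W) :
    walk A (Pi.single o 1) t (σ v) = walk A (Pi.single o 1) t v := by
  rw [walk_single_apply, walk_single_apply]
  conv_lhs => rw [← ho]
  have hsA : ((-(t : ℂ) * I) • A).submatrix σ σ = (-(t : ℂ) * I) • A := by
    change (-(t : ℂ) * I) • A.submatrix σ σ = _
    rw [hA]
  rw [← submatrix_apply (NormedSpace.exp _) σ σ, ← exp_submatrix_equiv, hsA]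

end Walk

theorem sum_zmod_two_eq_add {M : Type*} [AddCommMonoid M] (f : ZMod 2 → M) (δ : ZMod 2) :
    ∑ ε, f ε = f δ + f (δ + 1) := by
  fin_cases δ
  · exact Fin.sum_univ_two f
  · exact (Fin.sum_univ_two f).trans (add_comm _ _)

variable {V : Type*}

def joinMatrix (Q : Matrix V V ℂ) : Matrix (ZMod 2 × V) (ZMod 2 × V) ℂ :=
  (1 : Matrix (ZMod 2) (ZMod 2) ℂ) ⊗ₖ Q + Xmat ⊗ₖ (of fun (_ _ : V) => (1 : ℂ))

theorem joinMatrix_apply (Q : Matrix V V ℂ) (ε δ : ZMod 2) (x y : V) :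
    joinMatrix Q (ε, x) (δ, y) = if ε = δ then Q x y else 1 := by
  by_cases h : ε = δ <;> simp [joinMatrix, Xmat, one_apply, h]

def shiftSecondCopy [AddGroup V] (y : V) : ZMod 2 × V ≃ ZMod 2 × V :=
  (Equiv.refl _).prodShear fun ε => Equiv.addRight (ε.val • y)

theorem joinMatrix_circulant_submatrix_shiftSecondCopy [AddCommGroup V] (q : V → ℂ) (y : V) :
    (joinMatrix (circulant q)).submatrix (shiftSecondCopy y) (shiftSecondCopy y) =
      joinMatrix (circulant q) := by
  ext ⟨ε, x⟩ ⟨δ, z⟩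
  rcases eq_or_ne ε δ with rfl | h <;> simp [shiftSecondCopy, joinMatrix_apply, *]

theorem vecMul_joinMatrix_circulant [AddCommGroup V] [Fintype V] (q : V → ℂ) (g : ZMod 2 → ℂ) :
    (fun p : ZMod 2 × V => g p.1) ᵥ* joinMatrix (circulant q) =
      fun p => g p.1 * ∑ z, q z + g (p.1 + 1) * Fintype.card V := by
  ext ⟨δ, y⟩
  have hq : ∑ x, q (x - y) = ∑ z, q z := (Equiv.subRight y).sum_comp q
  simp only [vecMul, dotProduct, Fintype.sum_prod_type, joinMatrix_apply, circulant_apply]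
  rw [sum_zmod_two_eq_add _ δ]
  simp [← Finset.mul_sum, hq, mul_comm]

section Join

variable [AddCommGroup V] [Fintype V] [DecidableEq V]

theorem sum_walk_joinMatrix_circulant_second_copy (q : V → ℂ) (t : ℝ) :
    ∑ x, walk (joinMatrix (circulant q)) (Pi.single (0, 0) 1) t (1, x) =
      (cexp (-(t : ℂ) * I * (∑ z, q z + Fintype.card V))
        - cexp (-(t : ℂ) * I * (∑ z, q z - Fintype.card V))) / 2 := by
  set s : ℂ := -(t : ℂ) * I
  set E := NormedSpace.exp (s • joinMatrix (circulant q))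
  let sign : ZMod 2 → ℂ := fun ε => if ε = 0 then 1 else -1
  have hsign (ε : ZMod 2) : sign (ε + 1) = -sign ε := by
    have h : ε + 1 = 0 ↔ ¬ε = 0 := by revert ε; decide
    simp only [sign, h]
    split_ifs <;> simp
  have hplus : (fun _ => 1) ᵥ* E = cexp (s * (∑ z, q z + Fintype.card V)) • fun _ => 1 := by
    rw [Complex.exp_eq_exp_ℂ]
    refine vecMul_exp_of_vecMul_eq_smul ?_
    rw [vecMul_smul, vecMul_joinMatrix_circulant q fun _ => 1]
    ext p; simp
  have hminus : (fun p : ZMod 2 × V => sign p.1) ᵥ* E =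
      cexp (s * (∑ z, q z - Fintype.card V)) • fun p => sign p.1 := by
    rw [Complex.exp_eq_exp_ℂ]
    refine vecMul_exp_of_vecMul_eq_smul ?_
    rw [vecMul_smul, vecMul_joinMatrix_circulant q sign]
    ext p
    simp only [hsign, neg_mul, Pi.smul_apply, smul_eq_mul]
    ring
  have hdiff := congrFun (congrArg₂ (· - ·) hplus hminus) (0, 0)
  simp only [walk_single_apply]
  simp only [Pi.sub_apply, vecMul, dotProduct, one_mul, Fintype.sum_prod_type,
    sum_zmod_two_eq_add _ 0, zero_add, ite_mul, neg_mul, ↓reduceIte, one_ne_zero, sum_neg_distrib,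
    add_sub_add_left_eq_sub, sub_neg_eq_add, Pi.smul_apply, smul_eq_mul, mul_one, sign] at hdiff
  linear_combination hdiff / 2

theorem walk_joinMatrix_circulant_second_copy (q : V → ℂ) (t : ℝ) (x : V) :
    walk (joinMatrix (circulant q)) (Pi.single (0, 0) 1) t (1, x) =
      (cexp (-(t : ℂ) * I * (∑ z, q z + Fintype.card V))
        - cexp (-(t : ℂ) * I * (∑ z, q z - Fintype.card V))) / (2 * Fintype.card V) := by
  have hconst (y : V) : walk (joinMatrix (circulant q)) (Pi.single (0, 0) 1) t (1, y) =
      walk (joinMatrix (circulant q)) (Pi.single (0, 0) 1) t (1, x) := by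
    have hval : (1 : ZMod 2).val = 1 := rfl
    simpa [shiftSecondCopy, hval] using walk_single_apply_equiv_of_submatrix_eq (o := (0, 0))
      (joinMatrix_circulant_submatrix_shiftSecondCopy q (y - x)) (by simp [shiftSecondCopy]) t
      (1, x)
  have hsum := sum_walk_joinMatrix_circulant_second_copy q t
  rw [Finset.sum_congr rfl fun y _ => hconst y, Finset.sum_const, Finset.card_univ,
    nsmul_eq_mul] at hsum
  rw [eq_div_iff (by simp)]
  linear_combination 2 * hsum

theorem norm_walk_joinMatrix_circulant_second_copy_le (q : V → ℝ) (t : ℝ) (x : V) :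
    ‖walk (joinMatrix (circulant fun z => (q z : ℂ))) (Pi.single (0, 0) 1) t (1, x)‖ ≤
      (Fintype.card V : ℝ)⁻¹ := by
  have hphase (r : ℝ) : ‖cexp (-(t : ℂ) * I * r)‖ = 1 := by
    rw [show -(t : ℂ) * I * r = ((-(t * r) : ℝ) : ℂ) * I by push_cast; ring]
    exact norm_exp_ofReal_mul_I _
  have hplus : ‖cexp (-(t : ℂ) * I * (∑ z, (q z : ℂ) + Fintype.card V))‖ = 1 := by
    exact_mod_cast hphase (∑ z, q z + Fintype.card V)
  have hminus : ‖cexp (-(t : ℂ) * I * (∑ z, (q z : ℂ) - Fintype.card V))‖ = 1 := by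
    exact_mod_cast hphase (∑ z, q z - Fintype.card V)
  have hV : (0 : ℝ) < Fintype.card V := by exact_mod_cast Fintype.card_pos
  rw [walk_joinMatrix_circulant_second_copy, norm_div]
  calc _ ≤ (1 + 1) / (2 * Fintype.card V : ℝ) := by
        gcongr
        · exact (norm_sub_le _ _).trans (by rw [hplus, hminus])
        · simp
    _ = (Fintype.card V : ℝ)⁻¹ := by field_simp; norm_num

theorem joinMatrix_circulant_not_uniform_mixing (q : V → ℝ) (hV : 2 < Fintype.card V) (t : ℝ) :
    ∃ v, ‖walk (joinMatrix (circulant fun z => (q z : ℂ))) (Pi.single (0, 0) 1) t v‖ ^ 2 ≠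
      (2 * Fintype.card V : ℝ)⁻¹ := by
  refine ⟨(1, 0), ne_of_lt ?_⟩
  have hV' : (2 : ℝ) < Fintype.card V := by exact_mod_cast hV
  calc _ ≤ (Fintype.card V : ℝ)⁻¹ ^ 2 := by
        gcongr; exact norm_walk_joinMatrix_circulant_second_copy_le q t 0
    _ < (2 * Fintype.card V : ℝ)⁻¹ := by
        rw [inv_pow]
        gcongr
        nlinarith

end Join

theorem adjQ_eq_circulant (n : ℕ) :
    adjQ n = circulant fun z => ((if wt z = 1 then 1 else 0 : ℝ) : ℂ) := by
  ext x y
  have : x - y = x + y := funext fun i => CharTwo.sub_eq_add (x i) (y i)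
  simp [adjQ, this, apply_ite]

/-- For `n ≥ 2`, the quantum walk on the join of two hypercubes `Q_n + Q_n`
starting at `(0, 0_n)` is never instantaneous uniform mixing. -/
theorem join_of_hypercubes_not_uniform_mixing (n : ℕ) (hn : 2 ≤ n) :
    ∀ t : ℝ, ∃ v : ZMod 2 × (Fin n → ZMod 2),
      ‖walk (joinQQ n)
        (Pi.single ((0 : ZMod 2), (0 : Fin n → ZMod 2)) 1) t v‖ ^ 2
        ≠ 1 / 2 ^ (n + 1) := by
  have hcard : Fintype.card (Fin n → ZMod 2) = 2 ^ n := by simp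
  have hjoin : joinQQ n = joinMatrix (adjQ n) := rfl
  have hV : 2 < Fintype.card (Fin n → ZMod 2) := by
    rw [hcard]
    calc 2 < 2 ^ 2 := by norm_num
      _ ≤ 2 ^ n := Nat.pow_le_pow_right two_pos hn
  have hrate : (1 : ℝ) / 2 ^ (n + 1) = (2 * Fintype.card (Fin n → ZMod 2) : ℝ)⁻¹ := by
    rw [hcard]; push_cast; ring
  intro t
  rw [hjoin, adjQ_eq_circulant, hrate]
  exact joinMatrix_circulant_not_uniform_mixing _ hV t
end
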